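/- Let X be a centered Gaussian C([0,1])-valued random variable with X(0)=0 a.s., and suppose X has derivative X' in L². Let θ>0, 1≤p≤∞ and κ≥0. If limsup_{ε→0+} |log ε|^{-θ}·(-log P(‖X'(ω,·)‖_{L²[0,1]} ≤ ε)) ≤ κ, then limsup_{ε→0+} |log ε|^{-θ}·(-log P(‖X(ω)‖_{L_p[0,1]} ≤ ε)) ≤ κ. -/

import Mathlib

open MeasureTheory ProbabilityTheory Filter Topology Set ENNReal NNReal

noncomputable section

/-- The interval [0,1]. -/
abbrev I01 : Set ℝ := Set.Icc 0 1

/-- The Banach space C([0,1],ℝ) of continuous functions with the sup norm. -/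
abbrev PathSpace : Type := C(I01, ℝ)

instance : MeasurableSpace PathSpace := borel PathSpace

/-- `0` as an element of [0,1]. -/
def i0 : I01 := ⟨0, Set.mem_Icc.mpr ⟨le_rfl, zero_le_one⟩⟩

/-- minus-log, valued in [0,∞] (equal to ∞ at 0). -/
def negLog (x : ℝ≥0∞) : ℝ≥0∞ :=
  if x = 0 then ⊤ else ENNReal.ofReal (-Real.log x.toReal)

/-- The L_p-norm of a path, w.r.t. Lebesgue measure on [0,1] (ess-sup norm for p = ∞,
which agrees with the sup norm for continuous functions). -/
def pathLpNorm (p : ℝ≥0∞) (x : PathSpace) : ℝ≥0∞ :=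
  eLpNorm (fun t : I01 => x t) p volume

/-- The L²[0,1]-norm of a function on ℝ. -/
def l2Norm (f : ℝ → ℝ) : ℝ≥0∞ := eLpNorm f 2 (volume.restrict I01)

/-- `X` is a centered Gaussian `C([0,1])`-valued random variable with `X(0) = 0` a.s.:
`X` is measurable, every continuous linear functional of `X` has a centered Gaussian
distribution, and `X(0) = 0` almost surely. -/
def IsCenteredGaussianPath {Ω : Type*} [MeasurableSpace Ω] (P : Measure Ω)
    (X : Ω → PathSpace) : Prop :=
  Measurable X ∧ (∀ᵐ ω ∂P, X ω i0 = 0) ∧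
    ∀ L : PathSpace →L[ℝ] ℝ, ∃ v : ℝ≥0,
      Measure.map (fun ω => L (X ω)) P = gaussianReal 0 v

/-- `X` has derivative `X'` in L²: `X'` is jointly measurable, `X'(ω,·) ∈ L²[0,1]` for
a.e. `ω`, and almost surely `X(ω)(t) = ∫₀ᵗ X'(ω,s) ds` for all `t ∈ [0,1]`. -/
def HasL2Derivative {Ω : Type*} [MeasurableSpace Ω] (P : Measure Ω)
    (X : Ω → PathSpace) (X' : Ω → ℝ → ℝ) : Prop :=
  Measurable (Function.uncurry X') ∧
    (∀ᵐ ω ∂P, MemLp (X' ω) 2 (volume.restrict I01)) ∧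
    (∀ᵐ ω ∂P, ∀ t : I01, X ω t = ∫ s in (0:ℝ)..(t:ℝ), X' ω s)

/-- `X` has fractional derivative `f` of order `M` in L²: `f` is jointly measurable,
`f(ω,·) ∈ L²[0,1]` for a.e. `ω`, and almost surely
`X(ω)(t) = ∫₀ᵗ (t-s)^(M-1) f(ω,s) ds` for all `t ∈ [0,1]`. -/
def HasFracDeriv {Ω : Type*} [MeasurableSpace Ω] (P : Measure Ω)
    (X : Ω → PathSpace) (M : ℝ) (f : Ω → ℝ → ℝ) : Prop :=
  Measurable (Function.uncurry f) ∧
    (∀ᵐ ω ∂P, MemLp (f ω) 2 (volume.restrict I01)) ∧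
    (∀ᵐ ω ∂P, ∀ t : I01, X ω t = ∫ s in (0:ℝ)..(t:ℝ), ((t:ℝ) - s) ^ (M - 1) * f ω s)

/-- The η-Hölder seminorm `sup_{0 ≤ s < t ≤ 1} |x(t) - x(s)|/(t-s)^η`, valued in [0,∞]. -/
def holderNorm (η : ℝ) (x : PathSpace) : ℝ≥0∞ :=
  ⨆ (s : I01) (t : I01) (_ : (s:ℝ) < (t:ℝ)),
    ENNReal.ofReal (|x t - x s| / ((t:ℝ) - (s:ℝ)) ^ η)

/-!
Pathwise, since `X` is the primitive of `X'` vanishing at `0`,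
`‖X‖_{L_p} ≤ ‖X‖_∞ ≤ ‖X'‖_{L_1} ≤ ‖X'‖_{L_2}` on the probability space `[0,1]`. Hence every
small-ball event of `X'` is contained in the corresponding one of `X`, and `-log` reverses
the inequality between their probabilities.
-/

instance : IsProbabilityMeasure (volume : Measure I01) := by
  constructor
  rw [Measure.Subtype.volume_univ nullMeasurableSet_Icc, Real.volume_Icc]
  norm_num

instance : IsProbabilityMeasure (volume.restrict I01) := by
  constructor
  rw [Measure.restrict_apply_univ, Real.volume_Icc]
  norm_num

lemma negLog_antitone : Antitone negLog := by
  intro x y h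
  unfold negLog
  rcases eq_or_ne x 0 with rfl | hx
  · simp
  have hy : y ≠ 0 := (pos_iff_ne_zero.mpr hx |>.trans_le h).ne'
  rw [if_neg hx, if_neg hy]
  rcases eq_or_ne y ⊤ with rfl | hyt
  · simp
  have hxt : x ≠ ⊤ := ne_top_of_le_ne_top hyt h
  gcongr
  exact ENNReal.toReal_pos hx hxt

lemma limsup_mul_negLog_le_of_ae_le {α Ω : Type*} [MeasurableSpace Ω] {P : Measure Ω}
    {A B : Ω → ℝ≥0∞} (hAB : ∀ᵐ ω ∂P, A ω ≤ B ω) (g r : α → ℝ≥0∞) (l : Filter α) :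
    limsup (fun ε => g ε * negLog (P {ω | A ω ≤ r ε})) l ≤
      limsup (fun ε => g ε * negLog (P {ω | B ω ≤ r ε})) l := by
  refine limsup_le_limsup (Eventually.of_forall fun ε => ?_)
  refine mul_le_mul_right (negLog_antitone (measure_mono_ae ?_)) _
  filter_upwards [hAB] with ω hω hB
  exact hω.trans hB

lemma enorm_intervalIntegral_le_eLpNorm_one (f : ℝ → ℝ) {t : ℝ} (ht : t ∈ I01) :
    ‖∫ s in (0 : ℝ)..t, f s‖ₑ ≤ eLpNorm f 1 (volume.restrict I01) := by
  rw [intervalIntegral.integral_of_le ht.1, eLpNorm_one_eq_lintegral_enorm]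
  exact (enorm_integral_le_lintegral_enorm _).trans
    (lintegral_mono_set (Ioc_subset_Icc_self.trans (Icc_subset_Icc le_rfl ht.2)))

lemma pathLpNorm_le_of_forall_enorm_le {x : PathSpace} {C : ℝ≥0∞} (hC : ∀ t, ‖x t‖ₑ ≤ C)
    (p : ℝ≥0∞) : pathLpNorm p x ≤ C := by
  simpa [pathLpNorm] using
    eLpNorm_le_of_ae_enorm_bound (μ := volume) (p := p) (Eventually.of_forall hC)

lemma pathLpNorm_le_l2Norm_of_eq_integral {x : PathSpace} {f : ℝ → ℝ}
    (hf : AEStronglyMeasurable f (volume.restrict I01))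
    (hx : ∀ t : I01, x t = ∫ s in (0 : ℝ)..(t : ℝ), f s) (p : ℝ≥0∞) :
    pathLpNorm p x ≤ l2Norm f :=
  pathLpNorm_le_of_forall_enorm_le
    (fun t => hx t ▸ (enorm_intervalIntegral_le_eLpNorm_one f t.2).trans
      (eLpNorm_le_eLpNorm_of_exponent_le one_le_two hf)) p

theorem small_deviation_transfer_log_case_general
    {Ω : Type*} [MeasurableSpace Ω] (P : Measure Ω)
    (X : Ω → PathSpace) (X' : Ω → ℝ → ℝ)
    (hX' : HasL2Derivative P X X')
    (θ : ℝ) (p : ℝ≥0∞) (κ : ℝ)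
    (h : Filter.limsup (fun ε : ℝ =>
        ENNReal.ofReal (|Real.log ε| ^ (-θ)) *
          negLog (P {ω | l2Norm (X' ω) ≤ ENNReal.ofReal ε})) (𝓝[>] (0:ℝ))
      ≤ ENNReal.ofReal κ) :
    Filter.limsup (fun ε : ℝ =>
        ENNReal.ofReal (|Real.log ε| ^ (-θ)) *
          negLog (P {ω | pathLpNorm p (X ω) ≤ ENNReal.ofReal ε})) (𝓝[>] (0:ℝ))
      ≤ ENNReal.ofReal κ := by
  obtain ⟨-, hmem, hrep⟩ := hX'
  refine le_trans (limsup_mul_negLog_le_of_ae_le ?_ _ _ _) h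
  filter_upwards [hmem, hrep] with ω hω hx
  exact pathLpNorm_le_l2Norm_of_eq_integral hω.1 hx p

/-- (case `τ = ∞`) If `X` is a centered Gaussian path with derivative `X'`
in L², `θ > 0`, `1 ≤ p ≤ ∞`, `κ ≥ 0`, and
`limsup_{ε→0+} |log ε|^(-θ) (-log P(‖X'(ω,·)‖_{L²} ≤ ε)) ≤ κ`, then
`limsup_{ε→0+} |log ε|^(-θ) (-log P(‖X(ω)‖_{L_p} ≤ ε)) ≤ κ`. -/
theorem small_deviation_transfer_log_case
    {Ω : Type*} [MeasurableSpace Ω] (P : Measure Ω) [IsProbabilityMeasure P]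
    (X : Ω → PathSpace) (X' : Ω → ℝ → ℝ)
    (hX : IsCenteredGaussianPath P X) (hX' : HasL2Derivative P X X')
    (θ : ℝ) (hθ : 0 < θ) (p : ℝ≥0∞) (hp : 1 ≤ p) (κ : ℝ) (hκ : 0 ≤ κ)
    (h : Filter.limsup (fun ε : ℝ =>
        ENNReal.ofReal (|Real.log ε| ^ (-θ)) *
          negLog (P {ω | l2Norm (X' ω) ≤ ENNReal.ofReal ε})) (𝓝[>] (0:ℝ))
      ≤ ENNReal.ofReal κ) :
    Filter.limsup (fun ε : ℝ =>
        ENNReal.ofReal (|Real.log ε| ^ (-θ)) *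
          negLog (P {ω | pathLpNorm p (X ω) ≤ ENNReal.ofReal ε})) (𝓝[>] (0:ℝ))
      ≤ ENNReal.ofReal κ :=
  small_deviation_transfer_log_case_general P X X' hX' θ p κ h
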